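/- Let f : ℝ^n → ℝ be a convex polynomial function whose Hessian determinant h_f(x) = det(∇²f(x)) is not identically zero on ℝ^n. Then there exist α ∈ ℝ, β ∈ ℝ^n, and μ > 0 such that f(x) ≥ α + ⟨β, x⟩ + (μ/2)·‖x‖² for all x ∈ ℝ^n; that is, f admits a μ-strongly convex quadratic lower bound. -/

import Mathlib

/-!
Take a point `x₀` where the Hessian `B` of `f` is nondegenerate. Convexity makes `B` positive
semidefinite, hence positive definite, so `c ‖v‖² ≤ B v v` for some `c > 0`. Along the segment
from `x₀` to `x₀ + v`, `f` is a polynomial `R` of degree at most the total degree of `f`, with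
`R'' ≥ 0`, and `R(1) - R(0) - R'(0) = ∫₀¹ (1 - s) R''(s) ds`. By compactness of the cone of
polynomials of bounded degree that are nonnegative on `[0, 1]`, this integral is at least
`m R''(0) = m B v v` for a constant `m > 0` depending only on the degree. Hence
`f (x₀ + v) ≥ f x₀ + f' x₀ v + m c ‖v‖²`, and completing the square gives the bound.
-/

open RealInnerProductSpace

/-- The Hessian matrix of a function `f : ℝⁿ → ℝ` at a point `x`,
whose `(i,j)` entry is the second partial derivative `∂²f/∂xᵢ∂xⱼ (x)`. -/
noncomputable def hess {n : ℕ} (f : EuclideanSpace ℝ (Fin n) → ℝ)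
    (x : EuclideanSpace ℝ (Fin n)) : Matrix (Fin n) (Fin n) ℝ :=
  Matrix.of fun i j =>
    fderiv ℝ (fun y => fderiv ℝ f y (EuclideanSpace.single j 1)) x (EuclideanSpace.single i 1)

open Polynomial Set Matrix


theorem exists_pos_mul_norm_pow_le_of_cone {E : Type*} [NormedAddCommGroup E] [NormedSpace ℝ E]
    [FiniteDimensional ℝ E] {C : Set E} (hC : IsClosed C)
    (hC_smul : ∀ a ∈ C, ∀ t : ℝ, 0 < t → t • a ∈ C) {k : ℕ} (hk : k ≠ 0) {φ : E → ℝ}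
    (hφ : Continuous φ) (hφ_smul : ∀ a, ∀ t : ℝ, 0 < t → φ (t • a) = t ^ k * φ a)
    (hφ_pos : ∀ a ∈ C, a ≠ 0 → 0 < φ a) :
    ∃ c > 0, ∀ a ∈ C, c * ‖a‖ ^ k ≤ φ a := by
  obtain ⟨c, hc, hc_le⟩ := ((isCompact_sphere (0 : E) 1).inter_left hC).exists_forall_le'
    hφ.continuousOn fun u hu ↦ hφ_pos u hu.1 (ne_zero_of_mem_unit_sphere ⟨u, hu.2⟩)
  refine ⟨c, hc, fun a ha ↦ ?_⟩
  rcases eq_or_ne a 0 with rfl | ha0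
  · have h2 : φ 0 = 2 ^ k * φ 0 := by simpa using hφ_smul 0 2 two_pos
    have : (1 : ℝ) < 2 ^ k := one_lt_pow₀ one_lt_two hk
    have : φ 0 = 0 := by nlinarith
    simp [this, hk]
  · have hnorm : 0 < ‖a‖ := norm_pos_iff.mpr ha0
    have hu : ‖a‖⁻¹ • a ∈ C ∩ Metric.sphere 0 1 :=
      ⟨hC_smul a ha _ (inv_pos.mpr hnorm), by simp [norm_smul, hnorm.ne']⟩
    calc c * ‖a‖ ^ k ≤ φ (‖a‖⁻¹ • a) * ‖a‖ ^ k := by gcongr; exact hc_le _ hu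
      _ = φ a := by
        rw [hφ_smul _ _ (inv_pos.mpr hnorm), inv_pow, mul_comm, ← mul_assoc,
          mul_inv_cancel₀ (pow_pos hnorm k).ne', one_mul]

theorem exists_pos_mul_sq_norm_le_of_pos {E : Type*} [NormedAddCommGroup E] [NormedSpace ℝ E]
    [FiniteDimensional ℝ E] {B : E →L[ℝ] E →L[ℝ] ℝ} (hB : ∀ v ≠ 0, 0 < B v v) :
    ∃ c > 0, ∀ v, c * ‖v‖ ^ 2 ≤ B v v := by
  obtain ⟨c, hc, hc_le⟩ := exists_pos_mul_norm_pow_le_of_cone isClosed_univ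
    (fun _ _ _ _ ↦ mem_univ _) two_ne_zero (by fun_prop)
    (fun v t _ ↦ by simp only [map_smul, _root_.smul_apply, smul_eq_mul]; ring)
    fun v _ ↦ hB v
  exact ⟨c, hc, fun v ↦ hc_le v (mem_univ v)⟩

theorem exists_mem_Ioo_sum_mul_pow_ne_zero {n : ℕ} {a : Fin n → ℝ} (ha : a ≠ 0) :
    ∃ s ∈ Ioo (0 : ℝ) 1, ∑ k, a k * s ^ (k : ℕ) ≠ 0 := by
  by_contra! h
  set P : ℝ[X] := ∑ k, C (a k) * X ^ (k : ℕ)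
  have hP : P = 0 := eq_zero_of_infinite_isRoot P <|
    (Ioo_infinite zero_lt_one).mono fun s hs ↦ by simp [P, eval_finsetSum, h s hs]
  refine ha (funext fun k ↦ ?_)
  simpa [P, coeff_C_mul_X_pow, Fin.val_inj, eq_comm] using congrArg (coeff · k) hP

theorem exists_pos_mul_eval_zero_le_integral (K : ℕ) :
    ∃ m > 0, ∀ Q : ℝ[X], Q.natDegree ≤ K → (∀ s ∈ Icc (0 : ℝ) 1, 0 ≤ Q.eval s) →
      m * Q.eval 0 ≤ ∫ s in (0 : ℝ)..1, (1 - s) * Q.eval s := by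
  set ev : (Fin (K + 1) → ℝ) → ℝ → ℝ := fun a s ↦ ∑ k, a k * s ^ (k : ℕ) with hev
  set cone := {a | ∀ s ∈ Icc (0 : ℝ) 1, 0 ≤ ev a s}
  set φ := fun a ↦ ∫ s in (0 : ℝ)..1, (1 - s) * ev a s
  have ev_smul (t : ℝ) (a s) : ev (t • a) s = t * ev a s := by
    simp only [hev, Finset.mul_sum, Pi.smul_apply, smul_eq_mul, mul_assoc]
  have cone_closed : IsClosed cone := by
    simp only [cone, ofPred_forall]
    exact isClosed_biInter fun s _ ↦ isClosed_le continuous_const (by simp only [hev]; fun_prop)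
  have cone_smul : ∀ a ∈ cone, ∀ t : ℝ, 0 < t → t • a ∈ cone := fun a ha t ht s hs ↦ by
    rw [ev_smul]; exact mul_nonneg ht.le (ha s hs)
  have φ_smul (a) (t : ℝ) (_ : 0 < t) : φ (t • a) = t ^ 1 * φ a := by
    simp only [φ, ev_smul, pow_one, ← intervalIntegral.integral_const_mul]
    congr 1; ext s; ring
  have φ_pos : ∀ a ∈ cone, a ≠ 0 → 0 < φ a := fun a ha ha0 ↦ by
    obtain ⟨s, hs, hs0⟩ := exists_mem_Ioo_sum_mul_pow_ne_zero ha0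
    refine intervalIntegral.integral_pos zero_lt_one (by fun_prop)
      (fun u hu ↦ mul_nonneg (by linarith [hu.2]) (ha u (Ioc_subset_Icc_self hu)))
      ⟨s, Ioo_subset_Icc_self hs, mul_pos (by linarith [hs.2]) ?_⟩
    exact (ha s (Ioo_subset_Icc_self hs)).lt_of_ne' hs0
  obtain ⟨c, hc, hc_le⟩ := exists_pos_mul_norm_pow_le_of_cone cone_closed cone_smul one_ne_zero
    (intervalIntegral.continuous_parametric_intervalIntegral_of_continuous' (by fun_prop) _ _)
    φ_smul φ_pos
  refine ⟨c, hc, fun Q hQ hQ_nonneg ↦ ?_⟩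
  set a : Fin (K + 1) → ℝ := fun k ↦ Q.coeff k
  have hQ_ev : ∀ s, Q.eval s = ev a s := fun s ↦ by
    rw [eval_eq_sum_range' (Nat.lt_succ_of_le hQ), ← Fin.sum_univ_eq_sum_range]
  calc c * Q.eval 0 = c * a 0 := by simp [a, coeff_zero_eq_eval_zero]
    _ ≤ c * ‖a‖ ^ 1 := by
      gcongr; simpa using (le_abs_self _).trans (norm_le_pi_norm a 0)
    _ ≤ φ a := hc_le a fun s hs ↦ hQ_ev s ▸ hQ_nonneg s hs
    _ = _ := by simp only [φ, hQ_ev]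

theorem integral_one_sub_mul_eval_derivative_derivative (R : ℝ[X]) :
    ∫ s in (0 : ℝ)..1, (1 - s) * (derivative (derivative R)).eval s =
      R.eval 1 - R.eval 0 - (derivative R).eval 0 := by
  have hF (s : ℝ) : HasDerivAt (fun u ↦ (1 - u) * (derivative R).eval u + R.eval u)
      ((1 - s) * (derivative (derivative R)).eval s) s :=
    ((((hasDerivAt_id s).const_sub 1).mul ((derivative R).hasDerivAt s)).add
      (R.hasDerivAt s)).congr_deriv (by simp)
  rw [intervalIntegral.integral_eq_sub_of_hasDerivAt (fun s _ ↦ hF s)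
    (by apply Continuous.intervalIntegrable; fun_prop)]
  simp; ring

theorem exists_pos_eval_zero_add_mul_le_eval_one (K : ℕ) :
    ∃ m > 0, ∀ R : ℝ[X], R.natDegree ≤ K →
      (∀ s ∈ Icc (0 : ℝ) 1, 0 ≤ (derivative (derivative R)).eval s) →
      R.eval 0 + (derivative R).eval 0 + m * (derivative (derivative R)).eval 0 ≤ R.eval 1 := by
  obtain ⟨m, hm, hm_le⟩ := exists_pos_mul_eval_zero_le_integral K
  refine ⟨m, hm, fun R hR hR_nonneg ↦ ?_⟩
  have hdeg : (derivative (derivative R)).natDegree ≤ K :=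
    (natDegree_derivative_le _).trans <| (Nat.sub_le _ _).trans <|
      (natDegree_derivative_le _).trans <| (Nat.sub_le _ _).trans hR
  have := hm_le _ hdeg hR_nonneg
  rw [integral_one_sub_mul_eval_derivative_derivative] at this
  linarith

theorem ConvexOn.second_deriv_nonneg_of_hasDerivAt {g g' : ℝ → ℝ} (hg : ConvexOn ℝ univ g)
    (hg' : ∀ t, HasDerivAt g (g' t) t) {d t : ℝ} (hd : HasDerivAt g' d t) : 0 ≤ d := by
  have hmono := hg.monotoneOn_deriv fun t _ ↦ (hg' t).differentiableAt
  rw [show deriv g = g' from funext fun t ↦ (hg' t).deriv, monotoneOn_univ] at hmono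
  exact hd.nonneg_of_monotone hmono

section Lines

variable {E : Type*} [NormedAddCommGroup E] [NormedSpace ℝ E]

def IsPolynomialOnLines (K : ℕ) (f : E → ℝ) : Prop :=
  ∀ x v : E, ∃ R : ℝ[X], R.natDegree ≤ K ∧ ∀ t, R.eval t = f (x + t • v)

theorem ConvexOn.comp_add_smul {f : E → ℝ} (hf : ConvexOn ℝ univ f) (x v : E) :
    ConvexOn ℝ univ fun t : ℝ ↦ f (x + t • v) := by
  have hline : (fun t : ℝ ↦ f (x + t • v)) = f ∘ AffineMap.lineMap x (x + v) :=
    funext fun t ↦ by simp [AffineMap.lineMap_apply, add_comm]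
  simpa [hline] using hf.comp_affineMap (AffineMap.lineMap x (x + v))

theorem HasFDerivAt.hasDerivAt_comp_add_smul {f : E → ℝ} {f' : E →L[ℝ] ℝ} {x v : E} {t : ℝ}
    (hf : HasFDerivAt f f' (x + t • v)) :
    HasDerivAt (fun s : ℝ ↦ f (x + s • v)) (f' v) t :=
  hf.comp_hasDerivAt t (by simpa using ((hasDerivAt_id t).smul_const v).const_add x)

theorem HasFDerivAt.hasDerivAt_apply_add_smul {f' : E → E →L[ℝ] ℝ} {B : E →L[ℝ] E →L[ℝ] ℝ}
    {x : E} (hB : HasFDerivAt f' B x) (v : E) :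
    HasDerivAt (fun s : ℝ ↦ f' (x + s • v) v) (B v v) 0 :=
  HasFDerivAt.hasDerivAt_comp_add_smul (f' := B.flip v) (t := 0)
    (by simpa using hB.clm_apply (hasFDerivAt_const v x))

variable {f : E → ℝ} {f' : E → E →L[ℝ] ℝ} {B : E →L[ℝ] E →L[ℝ] ℝ} {x : E}

theorem ConvexOn.second_fderiv_apply_self_nonneg (hconv : ConvexOn ℝ univ f)
    (hf : ∀ y, HasFDerivAt f (f' y) y) (hB : HasFDerivAt f' B x) (v : E) : 0 ≤ B v v :=
  (hconv.comp_add_smul x v).second_deriv_nonneg_of_hasDerivAt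
    (fun _ ↦ (hf _).hasDerivAt_comp_add_smul) (hB.hasDerivAt_apply_add_smul v)

theorem IsPolynomialOnLines.exists_pos_add_mul_le {K : ℕ} (hpoly : IsPolynomialOnLines K f)
    (hconv : ConvexOn ℝ univ f) (hf : ∀ y, HasFDerivAt f (f' y) y) (hB : HasFDerivAt f' B x) :
    ∃ m > 0, ∀ v, f x + f' x v + m * B v v ≤ f (x + v) := by
  obtain ⟨m, hm, hm_le⟩ := exists_pos_eval_zero_add_mul_le_eval_one K
  refine ⟨m, hm, fun v ↦ ?_⟩
  obtain ⟨R, hR_deg, hR⟩ := hpoly x v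
  have hR_fun : (fun t ↦ R.eval t) = fun t ↦ f (x + t • v) := funext hR
  have hR' (t : ℝ) : (derivative R).eval t = f' (x + t • v) v :=
    (R.hasDerivAt t).unique (hR_fun ▸ (hf _).hasDerivAt_comp_add_smul)
  have hR'' : (derivative (derivative R)).eval 0 = B v v :=
    ((derivative R).hasDerivAt 0).unique (funext hR' ▸ hB.hasDerivAt_apply_add_smul v)
  have hR''_nonneg (s : ℝ) : 0 ≤ (derivative (derivative R)).eval s :=
    (hR_fun ▸ hconv.comp_add_smul x v).second_deriv_nonneg_of_hasDerivAt R.hasDerivAt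
      ((derivative R).hasDerivAt s)
  simpa [hR, hR', hR''] using hm_le R hR_deg fun s _ ↦ hR''_nonneg s

end Lines

theorem MvPolynomial.exists_natDegree_le_eval_eq {σ R : Type*} [CommRing R]
    (p : MvPolynomial σ R) (x v : σ → R) :
    ∃ q : R[X], q.natDegree ≤ p.totalDegree ∧ ∀ t, q.eval t = p.eval (x + t • v) := by
  refine ⟨aeval (fun i ↦ Polynomial.C (v i) * Polynomial.X + Polynomial.C (x i)) p, ?_, fun t ↦ ?_⟩
  · simpa using aeval_natDegree_le p le_rfl _ fun _ ↦ natDegree_linear_le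
  · rw [← Polynomial.coe_aeval_eq_eval, ← AlgHom.comp_apply, MvPolynomial.comp_aeval,
      MvPolynomial.aeval_eq_eval]
    congr 2
    funext i
    simp only [map_add, map_mul, Polynomial.aeval_C, Polynomial.aeval_X, Pi.add_apply,
      Pi.smul_apply, smul_eq_mul, Algebra.algebraMap_self, RingHom.id_apply]
    ring

section Hessian

variable {n : ℕ} {f : EuclideanSpace ℝ (Fin n) → ℝ} {x : EuclideanSpace ℝ (Fin n)}
  {B : EuclideanSpace ℝ (Fin n) →L[ℝ] EuclideanSpace ℝ (Fin n) →L[ℝ] ℝ}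

theorem hess_apply_of_hasFDerivAt (hB : HasFDerivAt (fderiv ℝ f) B x) (i j : Fin n) :
    hess f x i j = B (EuclideanSpace.single i 1) (EuclideanSpace.single j 1) := by
  simp [hess, (hB.clm_apply (hasFDerivAt_const (EuclideanSpace.single j 1) x)).fderiv]

theorem dotProduct_hess_mulVec_of_hasFDerivAt (hB : HasFDerivAt (fderiv ℝ f) B x)
    (w : Fin n → ℝ) : w ⬝ᵥ (hess f x *ᵥ w) = B (WithLp.toLp 2 w) (WithLp.toLp 2 w) := by
  have hw : WithLp.toLp 2 w = ∑ i, w i • EuclideanSpace.single i (1 : ℝ) := by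
    ext j; simp [Pi.single_apply]
  simp only [hw, map_sum, map_smul, _root_.sum_apply, _root_.smul_apply, smul_eq_mul,
    ← hess_apply_of_hasFDerivAt hB, dotProduct, mulVec, Finset.mul_sum]
  rw [Finset.sum_comm]
  refine Finset.sum_congr rfl fun i _ ↦ Finset.sum_congr rfl fun j _ ↦ ?_
  ring

theorem posDef_hess_of_hasFDerivAt (hf : Differentiable ℝ f) (hB : HasFDerivAt (fderiv ℝ f) B x)
    (hB_nonneg : ∀ v, 0 ≤ B v v) (hdet : (hess f x).det ≠ 0) : (hess f x).PosDef := by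
  have hsymm : (hess f x).IsHermitian := IsHermitian.ext fun i j ↦ by
    simp only [hess_apply_of_hasFDerivAt hB, star_trivial]
    exact second_derivative_symmetric (fun y ↦ (hf y).hasFDerivAt) hB _ _
  refine (PosSemidef.of_dotProduct_mulVec_nonneg hsymm fun w ↦ ?_).posDef_iff_det_ne_zero.mpr hdet
  rw [star_trivial, dotProduct_hess_mulVec_of_hasFDerivAt hB]
  exact hB_nonneg _

theorem pos_of_hess_det_ne_zero (hf : Differentiable ℝ f) (hB : HasFDerivAt (fderiv ℝ f) B x)
    (hB_nonneg : ∀ v, 0 ≤ B v v) (hdet : (hess f x).det ≠ 0) {v : EuclideanSpace ℝ (Fin n)}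
    (hv : v ≠ 0) : 0 < B v v := by
  have := (posDef_hess_of_hasFDerivAt hf hB hB_nonneg hdet).dotProduct_mulVec_pos
    (x := WithLp.ofLp v) (by simpa using hv)
  rwa [star_trivial, dotProduct_hess_mulVec_of_hasFDerivAt hB] at this

end Hessian

theorem exists_strongly_convex_minorant_of_le {E : Type*} [NormedAddCommGroup E]
    [InnerProductSpace ℝ E] [CompleteSpace E] {f : E → ℝ} {x₀ : E} {a c : ℝ} {L : E →L[ℝ] ℝ}
    (hc : 0 < c) (h : ∀ x, a + L (x - x₀) + c * ‖x - x₀‖ ^ 2 ≤ f x) :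
    ∃ (α : ℝ) (β : E) (μ : ℝ), 0 < μ ∧ ∀ x, α + ⟪β, x⟫ + (μ / 2) * ‖x‖ ^ 2 ≤ f x := by
  set g := (InnerProductSpace.toDual ℝ E).symm L
  refine ⟨a - L x₀ + c * ‖x₀‖ ^ 2, g - (2 * c) • x₀, 2 * c, by positivity, fun x ↦ ?_⟩
  have hg : ⟪g, x⟫ = L x := InnerProductSpace.toDual_symm_apply
  have := h x
  rw [map_sub, norm_sub_sq_real] at this
  rw [inner_sub_left, real_inner_smul_left, hg, real_inner_comm]
  linarith

/-- A convex polynomial function whose Hessian determinant is not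
identically zero admits a μ-strongly convex quadratic lower bound. -/
theorem convex_poly_strongly_convex_lower_bound {n : ℕ}
    (f : EuclideanSpace ℝ (Fin n) → ℝ)
    (hpoly : ∃ p : MvPolynomial (Fin n) ℝ, ∀ x, f x = MvPolynomial.eval (fun i => x i) p)
    (hconv : ConvexOn ℝ Set.univ f)
    (hdet : ¬ ∀ x, (hess f x).det = 0) :
    ∃ (α : ℝ) (β : EuclideanSpace ℝ (Fin n)) (μ : ℝ), 0 < μ ∧
      ∀ x, α + ⟪β, x⟫ + (μ / 2) * ‖x‖ ^ 2 ≤ f x := by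
  obtain ⟨p, hp⟩ := hpoly
  obtain ⟨x₀, hx₀⟩ := not_forall.mp hdet
  have hf_smooth : ContDiff ℝ 2 f := by
    rw [show f = _ from funext hp]
    exact (AnalyticOnNhd.eval_continuousLinearMap
      (PiLp.continuousLinearEquiv 2 ℝ fun _ : Fin n ↦ ℝ).toContinuousLinearMap p).contDiff
  have hf_diff : Differentiable ℝ f := hf_smooth.differentiable two_ne_zero
  have hf : ∀ y, HasFDerivAt f (fderiv ℝ f y) y := fun y ↦ (hf_diff y).hasFDerivAt
  have hB : HasFDerivAt (fderiv ℝ f) (fderiv ℝ (fderiv ℝ f) x₀) x₀ :=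
    ((hf_smooth.fderiv_right le_rfl).differentiable one_ne_zero x₀).hasFDerivAt
  have hpoly_lines : IsPolynomialOnLines p.totalDegree f := fun x v ↦ by
    obtain ⟨R, hR_deg, hR⟩ := p.exists_natDegree_le_eval_eq x v
    exact ⟨R, hR_deg, fun t ↦ by rw [hR, hp]; rfl⟩
  obtain ⟨c, hc, hc_le⟩ := exists_pos_mul_sq_norm_le_of_pos fun v hv ↦
    pos_of_hess_det_ne_zero hf_diff hB (hconv.second_fderiv_apply_self_nonneg hf hB) hx₀ hv
  obtain ⟨m, hm, hm_le⟩ := hpoly_lines.exists_pos_add_mul_le hconv hf hB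
  refine exists_strongly_convex_minorant_of_le (x₀ := x₀) (a := f x₀) (L := fderiv ℝ f x₀)
    (mul_pos hm hc) fun x ↦ ?_
  calc f x₀ + fderiv ℝ f x₀ (x - x₀) + m * c * ‖x - x₀‖ ^ 2
      ≤ f x₀ + fderiv ℝ f x₀ (x - x₀) + m * fderiv ℝ (fderiv ℝ f) x₀ (x - x₀) (x - x₀) := by
        rw [mul_assoc]; gcongr; exact hc_le _
    _ ≤ f x := by simpa using hm_le (x - x₀)
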